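/- For nonnegative integers $a_1,\ldots,a_n$ with $d = a_1+\cdots+a_n$, the constant term $\mathrm{CT}_x\,(x_1+\cdots+x_n)^{d}\prod_{l=1}^n x_l^{-a_l}\prod_{1\le i\ne j\le n}(1-x_i/x_j)^{a_j}$ equals $\frac{d!}{a_1!\,a_2!\cdots a_n!}$. -/

import Mathlib

open Finset

lemma alt_sum_choose_mul_choose (d l : ℕ) (hl : l ≤ d) :
    ∑ m ∈ Finset.range (d+1), (-1:ℚ)^(d-m) * (d.choose m) * (m.choose l)
      = if l = d then 1 else 0 := by
  rw [show d + 1 = l + (d - l + 1) by omega, Finset.sum_range_add]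
  have h1 : ∀ m ∈ Finset.range l, (-1:ℚ)^(d-m) * (d.choose m) * (m.choose l) = 0 := by
    intro m hm
    rw [Nat.choose_eq_zero_of_lt (Finset.mem_range.mp hm)]
    push_cast; ring
  rw [Finset.sum_congr rfl h1, Finset.sum_const_zero, zero_add]
  have h2 : ∀ i ∈ Finset.range (d-l+1), (-1:ℚ)^(d-(l+i)) * (d.choose (l+i)) * ((l+i).choose l)
      = (d.choose l) * ((-1:ℚ)^(d-l) * ((-1:ℚ)^i * ((d-l).choose i))) := by
    intro i hi
    have hi' : i ≤ d - l := Nat.lt_succ_iff.mp (Finset.mem_range.mp hi)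
    have key := Nat.choose_mul (n := d) (k := l + i) (s := l) (by omega)
    have key' := congrArg (Nat.cast : ℕ → ℚ) key
    push_cast at key'
    rw [show l + i - l = i by omega] at key'
    have hsign : (-1:ℚ)^(d-(l+i)) = (-1:ℚ)^(d-l) * (-1:ℚ)^i := by
      have e1 : (-1:ℚ)^(d-l) = (-1:ℚ)^(d-l-i) * (-1:ℚ)^i := by
        rw [← pow_add, show d-l-i+i = d-l by omega]
      rw [show d - (l+i) = d - l - i by omega, e1, mul_assoc, ← mul_pow]
      norm_num
    rw [hsign]
    linear_combination ((-1:ℚ)^(d-l) * (-1:ℚ)^i) * key'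
  rw [Finset.sum_congr rfl h2, ← Finset.mul_sum, ← Finset.mul_sum]
  have h3 : ∑ i ∈ Finset.range (d-l+1), (-1:ℚ)^i * ((d-l).choose i)
      = if d - l = 0 then 1 else 0 := by
    have h := congrArg (fun z : ℤ => (z : ℚ)) (Int.alternating_sum_range_choose (n := d - l))
    push_cast at h
    exact_mod_cast h
  rw [h3]
  rcases eq_or_ne l d with rfl | h
  · simp
  · rw [if_neg (by omega), if_neg h]; ring

lemma alt_sum_choose_mul_add_choose (d : ℕ) :
    ∑ m ∈ Finset.range (d+1), (-1:ℚ)^(d-m) * (d.choose m) * ((m+d).choose d) = 1 := by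
  have step1 : ∀ m ∈ Finset.range (d+1), (-1:ℚ)^(d-m) * (d.choose m) * ((m+d).choose d)
      = ∑ k ∈ Finset.range (d+1),
          (d.choose (d-k) : ℚ) * ((-1:ℚ)^(d-m) * (d.choose m) * (m.choose k)) := by
    intro m _
    have v := congrArg (Nat.cast : ℕ → ℚ) (Nat.add_choose_eq m d d)
    rw [Finset.Nat.sum_antidiagonal_eq_sum_range_succ_mk] at v
    push_cast at v
    rw [v, Finset.mul_sum]
    exact Finset.sum_congr rfl fun k _ => by ring
  rw [Finset.sum_congr rfl step1, Finset.sum_comm]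
  have step2 : ∀ k ∈ Finset.range (d+1),
      ∑ m ∈ Finset.range (d+1),
          (d.choose (d-k) : ℚ) * ((-1:ℚ)^(d-m) * (d.choose m) * (m.choose k))
      = if k = d then 1 else 0 := by
    intro k hk
    rw [← Finset.mul_sum, alt_sum_choose_mul_choose d k (Nat.lt_succ_iff.mp (Finset.mem_range.mp hk))]
    rcases eq_or_ne k d with rfl | h
    · simp
    · simp [h]
  rw [Finset.sum_congr rfl step2, Finset.sum_ite_eq' (Finset.range (d+1)) d (fun _ => (1:ℚ))]
  simp

section Lagr
open Polynomial

lemma lagrange_sum_eq_one {σ : Type*} [DecidableEq σ] (S : Finset σ) (hS : S.Nonempty)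
    (t : σ → ℚ) (ht : ∀ i ∈ S, ∀ j ∈ S, i ≠ j → t i ≠ t j) :
    ∑ r ∈ S, (t r)^(S.card - 1) * (∏ i ∈ S.erase r, (t r - t i))⁻¹ = 1 := by
  classical
  set s := S.card with hs
  have hs1 : 1 ≤ s := Finset.card_pos.mpr hS
  -- the basis polynomials
  set P : σ → Polynomial ℚ := fun r => ∏ i ∈ S.erase r, (X - C (t i)) with hP
  have hPmonic : ∀ r, (P r).Monic := fun r =>
    monic_prod_of_monic _ _ fun i _ => monic_X_sub_C (t i)
  have hPdeg : ∀ r ∈ S, (P r).natDegree = s - 1 := by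
    intro r hr
    rw [hP, natDegree_prod_of_monic _ _ (fun i _ => monic_X_sub_C (t i))]
    simp [Finset.card_erase_of_mem hr, hs]
  set c : σ → ℚ := fun r => (t r)^(s - 1) * (∏ i ∈ S.erase r, (t r - t i))⁻¹ with hc
  have hprod_ne : ∀ r ∈ S, (∏ i ∈ S.erase r, (t r - t i)) ≠ 0 := by
    intro r hr
    refine Finset.prod_ne_zero_iff.mpr fun i hi => ?_
    have hi' := Finset.mem_erase.mp hi
    exact sub_ne_zero.mpr (ht r hr i hi'.2 (Ne.symm hi'.1))
  set W : Polynomial ℚ := X^(s-1) - ∑ r ∈ S, C (c r) * P r with hW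
  have hWdeg : W.degree < (S.card : WithBot ℕ) := by
    apply lt_of_le_of_lt (degree_sub_le _ _)
    rw [max_lt_iff]
    constructor
    · rw [degree_X_pow]
      exact_mod_cast Nat.sub_lt (by omega) one_pos
    · apply lt_of_le_of_lt (degree_sum_le _ _)
      rw [Finset.sup_lt_iff (by exact_mod_cast WithBot.bot_lt_coe _)]
      intro r hr
      calc (C (c r) * P r).degree ≤ ((C (c r) * P r).natDegree : WithBot ℕ) :=
            degree_le_natDegree
        _ ≤ ((P r).natDegree : WithBot ℕ) := by exact_mod_cast natDegree_C_mul_le _ _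
        _ < (S.card : WithBot ℕ) := by
            rw [hPdeg r hr]
            exact_mod_cast Nat.sub_lt (by omega) one_pos
  have hWeval : ∀ j ∈ S, W.eval (t j) = 0 := by
    intro j hj
    rw [hW]
    simp only [eval_sub, eval_pow, eval_X, eval_finset_sum, eval_mul, eval_C]
    have : ∀ r ∈ S, c r * (P r).eval (t j) = if r = j then (t j)^(s-1) else 0 := by
      intro r hr
      rcases eq_or_ne r j with rfl | hrj
      · rw [if_pos rfl, hc]
        have : (P r).eval (t r) = ∏ i ∈ S.erase r, (t r - t i) := by
          rw [hP]; simp [eval_prod]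
        rw [this]
        field_simp [hprod_ne r hr]
      · rw [if_neg hrj]
        have : (P r).eval (t j) = 0 := by
          rw [hP, eval_prod]
          apply Finset.prod_eq_zero (Finset.mem_erase.mpr ⟨Ne.symm hrj, hj⟩)
          simp
        rw [this, mul_zero]
    rw [Finset.sum_congr rfl this, Finset.sum_ite_eq' S j (fun _ => (t j)^(s-1)), if_pos hj]
    ring
  have hW0 : W = 0 :=
    Polynomial.eq_zero_of_degree_lt_of_eval_index_eq_zero S
      (fun i hi j hj hij => by_contra fun hne => (ht i hi j hj hne) hij)
      hWdeg hWeval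
  have hcoeff := congrArg (fun p => Polynomial.coeff p (s-1)) hW0
  simp only [hW, coeff_sub, coeff_X_pow, eq_self_iff_true, if_true, coeff_zero,
    Polynomial.finset_sum_coeff, coeff_C_mul] at hcoeff
  have hPc : ∀ r ∈ S, (P r).coeff (s-1) = 1 := by
    intro r hr
    have := (hPmonic r).coeff_natDegree
    rwa [hPdeg r hr] at this
  rw [Finset.sum_congr rfl (fun r hr => by rw [hPc r hr, mul_one])] at hcoeff
  have : ∑ r ∈ S, c r = 1 := by
    have h2 : S.sum c = ∑ r ∈ S, c r := rfl
    linarith [hcoeff]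
  exact this

end Lagr

open MvPolynomial

noncomputable def Fdy {σ : Type*} [DecidableEq σ] (S : Finset σ) (a : σ → ℕ) :
    MvPolynomial σ ℚ :=
  ∏ j ∈ S, ∏ i ∈ S.erase j, (X j - X i) ^ (a j)

lemma eval_Fdy {σ : Type*} [DecidableEq σ] (S : Finset σ) (a : σ → ℕ) (t : σ → ℚ) :
    eval t (Fdy S a) = ∏ j ∈ S, ∏ i ∈ S.erase j, (t j - t i) ^ (a j) := by
  simp [Fdy]

/-- Splitting off one power from the `r`-th block. -/
lemma Fdy_factor {σ : Type*} [DecidableEq σ] (S : Finset σ) (a : σ → ℕ) (r : σ)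
    (hr : r ∈ S) (har : 1 ≤ a r) :
    Fdy S a = Fdy S (Function.update a r (a r - 1)) * ∏ i ∈ S.erase r, (X r - X i) := by
  unfold Fdy
  rw [← Finset.mul_prod_erase S _ hr, ← Finset.mul_prod_erase S
    (fun j => ∏ i ∈ S.erase j, (X j - X i) ^ (Function.update a r (a r - 1) j)) hr]
  have h1 : ∏ i ∈ S.erase r, ((X r : MvPolynomial σ ℚ) - X i) ^ a r
      = (∏ i ∈ S.erase r, (X r - X i) ^ (Function.update a r (a r - 1) r))
        * ∏ i ∈ S.erase r, (X r - X i) := by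
    rw [← Finset.prod_mul_distrib]
    apply Finset.prod_congr rfl
    intro i _
    rw [Function.update_self, ← pow_succ, Nat.sub_add_cancel har]
  have h2 : ∀ j ∈ S.erase r, ∏ i ∈ S.erase j, ((X j : MvPolynomial σ ℚ) - X i) ^ a j
      = ∏ i ∈ S.erase j, (X j - X i) ^ (Function.update a r (a r - 1) j) := by
    intro j hj
    have hjr := (Finset.mem_erase.mp hj).1
    apply Finset.prod_congr rfl
    intro i _
    rw [Function.update_of_ne hjr]
  rw [h1, Finset.prod_congr rfl h2]
  ring

/-- Splitting off the variable `r` when `a r = 0`. -/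
lemma Fdy_erase {σ : Type*} [DecidableEq σ] (S : Finset σ) (a : σ → ℕ) (r : σ)
    (hr : r ∈ S) (har : a r = 0) :
    Fdy S a = Fdy (S.erase r) a * ∏ j ∈ S.erase r, (X j - X r) ^ (a j) := by
  unfold Fdy
  rw [← Finset.mul_prod_erase S _ hr]
  have h0 : ∏ i ∈ S.erase r, ((X r : MvPolynomial σ ℚ) - X i) ^ a r = 1 := by
    simp [har]
  rw [h0, one_mul]
  have h1 : ∀ j ∈ S.erase r, ∏ i ∈ S.erase j, ((X j : MvPolynomial σ ℚ) - X i) ^ a j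
      = ((X j - X r) ^ (a j)) * ∏ i ∈ (S.erase r).erase j, (X j - X i) ^ a j := by
    intro j hj
    have hjr := (Finset.mem_erase.mp hj).1
    have hrj : r ∈ S.erase j := Finset.mem_erase.mpr ⟨fun h => hjr h.symm, hr⟩
    rw [← Finset.mul_prod_erase (S.erase j) _ hrj, Finset.erase_right_comm]
  rw [Finset.prod_congr rfl h1, Finset.prod_mul_distrib, mul_comm]

/-- Killing a variable doesn't change coefficients of monomials not containing it. -/
lemma coeff_kill {σ : Type*} [DecidableEq σ] (r : σ) (p : MvPolynomial σ ℚ)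
    (c : σ →₀ ℕ) (hc : c r = 0) :
    coeff c (aeval (fun i => if i = r then 0 else X i) p) = coeff c p := by
  induction p using MvPolynomial.induction_on' with
  | add p q hp hq => simp only [map_add, coeff_add, hp, hq]
  | monomial u q =>
    rw [aeval_monomial]
    by_cases hur : u r = 0
    · have : (u.prod fun i k => (if i = r then (0 : MvPolynomial σ ℚ) else X i) ^ k)
          = u.prod fun i k => (X i) ^ k := by
        apply Finsupp.prod_congr
        intro i hi
        have : i ≠ r := fun h => by
          subst h; exact (Finsupp.mem_support_iff.mp hi) hur
        rw [if_neg this]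
      rw [this]
      have : (algebraMap ℚ (MvPolynomial σ ℚ)) q * u.prod (fun i k => (X i) ^ k)
          = monomial u q := by
        rw [monomial_eq]; rfl
      rw [this]
    · have hmem : r ∈ u.support := Finsupp.mem_support_iff.mpr hur
      have : (u.prod fun i k => (if i = r then (0 : MvPolynomial σ ℚ) else X i) ^ k) = 0 := by
        rw [Finsupp.prod]
        apply Finset.prod_eq_zero hmem
        rw [if_pos rfl, zero_pow hur]
      rw [this, mul_zero, coeff_zero, coeff_monomial,
        if_neg (fun h => hur (by rw [h]; exact hc))]

lemma prod_X_pow_eq_monomial' {σ : Type*} [Fintype σ] [DecidableEq σ] (T : Finset σ)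
    (a : σ → ℕ) (ha : ∀ j ∉ T, a j = 0) :
    ∏ j ∈ T, (X j : MvPolynomial σ ℚ) ^ (a j)
      = monomial (Finsupp.equivFunOnFinite.symm a) 1 := by
  rw [monomial_eq, C_1, one_mul, Finsupp.prod]
  have hsub : (Finsupp.equivFunOnFinite.symm a).support ⊆ T := by
    intro j hj
    by_contra hjT
    exact (Finsupp.mem_support_iff.mp hj) (by simp [ha j hjT])
  rw [eq_comm]
  apply Finset.prod_subset hsub
  · intro j hjT hjn
    have : a j = 0 := by simpa using Finsupp.notMem_support_iff.mp hjn
    simp [this]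

lemma kill_Fdy_fix {σ : Type*} [DecidableEq σ] (S' : Finset σ) (a : σ → ℕ) (r : σ)
    (hr : r ∉ S') :
    aeval (fun i => if i = r then 0 else X i) (Fdy S' a) = Fdy S' a := by
  unfold Fdy
  rw [map_prod]
  apply Finset.prod_congr rfl
  intro j hj
  rw [map_prod]
  apply Finset.prod_congr rfl
  intro i hi
  have hjr : j ≠ r := fun h => hr (h ▸ hj)
  have hir : i ≠ r := fun h => hr (h ▸ (Finset.mem_of_mem_erase hi))
  rw [map_pow, map_sub, aeval_X, aeval_X, if_neg hjr, if_neg hir]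

lemma kill_prod {σ : Type*} [DecidableEq σ] (S' : Finset σ) (a : σ → ℕ) (r : σ) :
    aeval (fun i => if i = r then 0 else X i) (∏ j ∈ S'.erase r, ((X j : MvPolynomial σ ℚ) - X r) ^ (a j))
      = ∏ j ∈ S'.erase r, (X j : MvPolynomial σ ℚ) ^ (a j) := by
  rw [map_prod]
  apply Finset.prod_congr rfl
  intro j hj
  have hjr : j ≠ r := (Finset.mem_erase.mp hj).1
  rw [map_pow, map_sub, aeval_X, aeval_X, if_neg hjr, if_pos rfl, sub_zero]

/-- The Good-style recursion, via Lagrange interpolation. -/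
lemma Fdy_rec {σ : Type*} [DecidableEq σ] (S : Finset σ) (a : σ → ℕ) (hS : S.Nonempty)
    (h1 : ∀ j ∈ S, 1 ≤ a j) :
    Fdy S a = ∑ r ∈ S, Fdy S (Function.update a r (a r - 1)) * (X r) ^ (S.card - 1) := by
  apply MvPolynomial.funext
  intro t
  rw [map_sum]
  simp only [map_mul, map_pow, eval_X, eval_Fdy]
  by_cases hdist : ∀ i ∈ S, ∀ j ∈ S, i ≠ j → t i ≠ t j
  · -- distinct evaluation points
    set v : ℚ := ∏ j ∈ S, ∏ i ∈ S.erase j, (t j - t i) ^ (a j) with hv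
    have hp : ∀ r ∈ S, (∏ i ∈ S.erase r, (t r - t i)) ≠ 0 := by
      intro r hr
      refine Finset.prod_ne_zero_iff.mpr fun i hi => ?_
      have hi' := Finset.mem_erase.mp hi
      exact sub_ne_zero.mpr (hdist r hr i hi'.2 (Ne.symm hi'.1))
    have hterm : ∀ r ∈ S, ∏ j ∈ S, ∏ i ∈ S.erase j, (t j - t i) ^ (Function.update a r (a r - 1) j)
        = v * (∏ i ∈ S.erase r, (t r - t i))⁻¹ := by
      intro r hr
      have := congrArg (eval t) (Fdy_factor S a r hr (h1 r hr))
      rw [map_mul, eval_Fdy, eval_Fdy] at this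
      have heval2 : eval t (∏ i ∈ S.erase r, ((X r : MvPolynomial σ ℚ) - X i))
          = ∏ i ∈ S.erase r, (t r - t i) := by
        rw [map_prod]
        exact Finset.prod_congr rfl fun i _ => by rw [map_sub, eval_X, eval_X]
      rw [heval2] at this
      field_simp [hp r hr]
      linarith [this]
    have hsum : ∑ r ∈ S, (∏ j ∈ S, ∏ i ∈ S.erase j, (t j - t i) ^ (Function.update a r (a r - 1) j)) * t r ^ (S.card - 1)
        = ∑ r ∈ S, v * (∏ i ∈ S.erase r, (t r - t i))⁻¹ * t r ^ (S.card - 1) :=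
      Finset.sum_congr rfl fun r hr => by rw [hterm r hr]
    rw [hsum]
    have : ∑ r ∈ S, v * (∏ i ∈ S.erase r, (t r - t i))⁻¹ * t r ^ (S.card - 1)
        = v * ∑ r ∈ S, t r ^ (S.card - 1) * (∏ i ∈ S.erase r, (t r - t i))⁻¹ := by
      rw [Finset.mul_sum]
      exact Finset.sum_congr rfl fun r _ => by ring
    rw [this, lagrange_sum_eq_one S hS t hdist, mul_one]
  · -- a collision
    push_neg at hdist
    obtain ⟨i0, hi0, j0, hj0, hij, heq⟩ := hdist
    have hzero : ∀ b : σ → ℕ, 1 ≤ b i0 ∨ 1 ≤ b j0 →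
        ∏ j ∈ S, ∏ i ∈ S.erase j, (t j - t i) ^ (b j) = 0 := by
      intro b hb
      rcases hb with hb | hb
      · apply Finset.prod_eq_zero hi0
        apply Finset.prod_eq_zero (Finset.mem_erase.mpr ⟨Ne.symm hij, hj0⟩)
        rw [heq, sub_self, zero_pow (by omega)]
      · apply Finset.prod_eq_zero hj0
        apply Finset.prod_eq_zero (Finset.mem_erase.mpr ⟨hij, hi0⟩)
        rw [heq, sub_self, zero_pow (by omega)]
    rw [hzero a (Or.inl (h1 i0 hi0))]
    rw [eq_comm, Finset.sum_eq_zero]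
    intro r hr
    rcases eq_or_ne r i0 with rfl | hri
    · rw [hzero _ (Or.inr (by rw [Function.update_of_ne (Ne.symm hij)]; exact h1 j0 hj0)),
        zero_mul]
    · rw [hzero _ (Or.inl (by rw [Function.update_of_ne (Ne.symm hri)]; exact h1 i0 hi0)), zero_mul]

theorem partI {σ : Type*} [Fintype σ] [DecidableEq σ] :
    ∀ (k : ℕ) (S : Finset σ) (a : σ → ℕ), (∀ j ∉ S, a j = 0) →
      S.card + ∑ j ∈ S, a j = k →
      coeff (Finsupp.equivFunOnFinite.symm fun j => (S.card - 1) * a j) (Fdy S a)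
        = ((∑ j ∈ S, a j).factorial : ℚ) / ∏ j ∈ S, ((a j).factorial : ℚ) := by
  intro k
  induction k using Nat.strong_induction_on with
  | _ k IH =>
  intro S a ha hk
  by_cases h0 : ∃ r ∈ S, a r = 0
  · -- reduction to a smaller variable set
    obtain ⟨r, hr, har⟩ := h0
    have hsupp : ∀ j ∉ S.erase r, a j = 0 := by
      intro j hj
      by_cases hjr : j = r
      · exact hjr ▸ har
      · exact ha j fun hjS => hj (Finset.mem_erase.mpr ⟨hjr, hjS⟩)
    have hc_r : (Finsupp.equivFunOnFinite.symm fun j => (S.card - 1) * a j) r = 0 := by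
      simp [har]
    rw [← coeff_kill r _ _ hc_r, Fdy_erase S a r hr har, map_mul,
      kill_Fdy_fix _ _ _ (Finset.notMem_erase r S), kill_prod,
      prod_X_pow_eq_monomial' (S.erase r) a hsupp, coeff_mul_monomial']
    have hle : Finsupp.equivFunOnFinite.symm a
        ≤ Finsupp.equivFunOnFinite.symm fun j => (S.card - 1) * a j := by
      rw [Finsupp.le_def]
      intro j
      simp only [Finsupp.equivFunOnFinite_symm_apply_apply]
      rcases Nat.eq_zero_or_pos (a j) with hz | hpos
      · simp [hz]
      · have hjS : j ∈ S := by
          by_contra hjS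
          rw [ha j hjS] at hpos
          omega
        have hjr : j ≠ r := fun h => by rw [h, har] at hpos; omega
        have h2 : 1 < S.card := Finset.one_lt_card.mpr ⟨r, hr, j, hjS, Ne.symm hjr⟩
        exact Nat.le_mul_of_pos_left (a j) (by omega)
    rw [if_pos hle, mul_one]
    have hshift : (Finsupp.equivFunOnFinite.symm fun j => (S.card - 1) * a j)
        - Finsupp.equivFunOnFinite.symm a
        = Finsupp.equivFunOnFinite.symm fun j => ((S.erase r).card - 1) * a j := by
      ext j
      simp only [Finsupp.tsub_apply, Finsupp.equivFunOnFinite_symm_apply_apply,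
        Finset.card_erase_of_mem hr]
      conv_rhs => rw [Nat.sub_mul, one_mul]
    rw [hshift]
    have hlt : (S.erase r).card + ∑ j ∈ S.erase r, a j < k := by
      rw [Finset.card_erase_of_mem hr, Finset.sum_erase S har]
      have hcard : 1 ≤ S.card := Finset.card_pos.mpr ⟨r, hr⟩
      omega
    rw [IH _ hlt (S.erase r) a hsupp rfl, Finset.sum_erase S har,
      Finset.prod_erase S (f := fun j => ((a j).factorial : ℚ)) (by simp [har])]
  · -- all exponents positive on S
    rcases S.eq_empty_or_nonempty with rfl | hS
    · have hc : (Finsupp.equivFunOnFinite.symm fun j =>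
          ((∅ : Finset σ).card - 1) * a j) = 0 := by
        ext j
        simp [ha j (Finset.notMem_empty j)]
      rw [hc]
      simp [Fdy]
    · have h1 : ∀ j ∈ S, 1 ≤ a j :=
        fun j hj => Nat.one_le_iff_ne_zero.mpr fun h => h0 ⟨j, hj, h⟩
      set D := ∑ j ∈ S, a j with hD
      have hDpos : 1 ≤ D := by
        obtain ⟨j, hj⟩ := hS
        calc 1 ≤ a j := h1 j hj
          _ ≤ D := Finset.single_le_sum (fun i _ => Nat.zero_le _) hj
      rw [Fdy_rec S a hS h1, coeff_sum]
      have hterm : ∀ r ∈ S,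
          coeff (Finsupp.equivFunOnFinite.symm fun j => (S.card - 1) * a j)
            (Fdy S (Function.update a r (a r - 1)) * X r ^ (S.card - 1))
          = ((D - 1).factorial : ℚ) /
              (((a r - 1).factorial : ℚ) * ∏ j ∈ S.erase r, ((a j).factorial : ℚ)) := by
        intro r hr
        have hle : Finsupp.single r (S.card - 1)
            ≤ Finsupp.equivFunOnFinite.symm fun j => (S.card - 1) * a j := by
          rw [Finsupp.le_def]
          intro j
          simp only [Finsupp.equivFunOnFinite_symm_apply_apply, Finsupp.single_apply]
          rcases eq_or_ne r j with rfl | hrj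
          · rw [if_pos rfl]
            exact Nat.le_mul_of_pos_right _ (h1 r hr)
          · rw [if_neg hrj]
            exact Nat.zero_le _
        rw [X_pow_eq_monomial, coeff_mul_monomial', if_pos hle, mul_one]
        have hshift : (Finsupp.equivFunOnFinite.symm fun j => (S.card - 1) * a j)
            - Finsupp.single r (S.card - 1)
            = Finsupp.equivFunOnFinite.symm
                fun j => (S.card - 1) * (Function.update a r (a r - 1) j) := by
          ext j
          simp only [Finsupp.tsub_apply, Finsupp.equivFunOnFinite_symm_apply_apply,
            Finsupp.single_apply]
          rcases eq_or_ne r j with rfl | hrj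
          · rw [if_pos rfl, Function.update_self, Nat.mul_sub, mul_one]
          · rw [if_neg hrj, Function.update_of_ne (Ne.symm hrj), Nat.sub_zero]
        rw [hshift]
        have hsum_upd : ∑ j ∈ S, Function.update a r (a r - 1) j = D - 1 := by
          rw [Finset.sum_update_of_mem hr, Finset.sdiff_singleton_eq_erase]
          have h2 := Finset.add_sum_erase S a hr
          rw [← hD] at h2
          have h1r := h1 r hr
          omega
        have hlt : S.card + ∑ j ∈ S, Function.update a r (a r - 1) j < k := by
          rw [hsum_upd]
          omega
        have hsupp' : ∀ j ∉ S, Function.update a r (a r - 1) j = 0 := by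
          intro j hj
          rw [Function.update_of_ne (fun h => hj (by rw [h]; exact hr)), ha j hj]
        rw [IH _ hlt S _ hsupp' rfl, hsum_upd]
        congr 1
        rw [← Finset.mul_prod_erase S _ hr, Function.update_self]
        push_cast
        congr 1
        apply Finset.prod_congr rfl
        intro j hj
        rw [Function.update_of_ne (Finset.mem_erase.mp hj).1]
      rw [Finset.sum_congr rfl hterm]
      have hPne : (∏ j ∈ S, ((a j).factorial : ℚ)) ≠ 0 :=
        Finset.prod_ne_zero_iff.mpr fun j _ => by
          exact_mod_cast (a j).factorial_ne_zero
      have hfinal : ∀ r ∈ S,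
          ((D - 1).factorial : ℚ) /
              (((a r - 1).factorial : ℚ) * ∏ j ∈ S.erase r, ((a j).factorial : ℚ))
          = (a r : ℚ) * (((D - 1).factorial : ℚ) / ∏ j ∈ S, ((a j).factorial : ℚ)) := by
        intro r hr
        have har1 : (a r : ℚ) * ((a r - 1).factorial : ℚ) = ((a r).factorial : ℚ) := by
          exact_mod_cast Nat.mul_factorial_pred (Nat.one_le_iff_ne_zero.mp (h1 r hr))
        have hne1 : ((a r - 1).factorial : ℚ) ≠ 0 := by
          exact_mod_cast (a r - 1).factorial_ne_zero
        have hne2 : (∏ j ∈ S.erase r, ((a j).factorial : ℚ)) ≠ 0 :=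
          Finset.prod_ne_zero_iff.mpr fun j _ => by
            exact_mod_cast (a j).factorial_ne_zero
        rw [mul_div_assoc', div_eq_div_iff (by positivity) hPne,
          ← Finset.mul_prod_erase S (fun j => ((a j).factorial : ℚ)) hr]
        linear_combination (-((D - 1).factorial : ℚ) *
          ∏ j ∈ S.erase r, ((a j).factorial : ℚ)) * har1
      rw [Finset.sum_congr rfl hfinal, ← Finset.sum_mul]
      have hcast : (∑ r ∈ S, (a r : ℚ)) = (D : ℚ) := by
        rw [hD]
        push_cast
        rfl
      rw [hcast, mul_div_assoc']
      congr 1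
      exact_mod_cast Nat.mul_factorial_pred (Nat.one_le_iff_ne_zero.mp hDpos)

noncomputable def Ahat (n : ℕ) : Polynomial (MvPolynomial (Fin n) ℚ) :=
  ∏ i : Fin n, (Polynomial.X - Polynomial.C (X i))

noncomputable def Bhat (n : ℕ) (a : Fin n → ℕ) : Polynomial (MvPolynomial (Fin n) ℚ) :=
  (∏ i : Fin n, (Polynomial.C (X i) - Polynomial.X) ^ (a i)) *
    Polynomial.C (Fdy Finset.univ a)

lemma phi_F (n : ℕ) (a : Fin n → ℕ) (m : ℕ) :
    finSuccEquiv ℚ n (Fdy Finset.univ (Fin.cons m a)) = (Ahat n) ^ m * Bhat n a := by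
  have herase0 : (Finset.univ.erase (0 : Fin (n+1)))
      = Finset.univ.map ⟨Fin.succ, Fin.succ_injective n⟩ := by
    ext i
    simp only [Finset.mem_erase, Finset.mem_univ, and_true, Finset.mem_map,
      Function.Embedding.coeFn_mk, true_and]
    exact (Fin.exists_succ_eq (x := i)).symm
  have hsplit : Fdy Finset.univ (Fin.cons m a)
      = (∏ i : Fin n, ((X 0 : MvPolynomial (Fin (n+1)) ℚ) - X i.succ) ^ m) *
        ∏ k : Fin n, ((X k.succ - X 0) ^ (a k) *
          ∏ i ∈ Finset.univ.erase k, ((X k.succ : MvPolynomial (Fin (n+1)) ℚ)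
            - X i.succ) ^ (a k)) := by
    rw [Fdy, ← Finset.mul_prod_erase Finset.univ _ (Finset.mem_univ (0 : Fin (n+1)))]
    congr 1
    · rw [herase0, Finset.prod_map]
      simp [Fin.cons_zero]
    · rw [herase0, Finset.prod_map]
      apply Finset.prod_congr rfl
      intro k _
      simp only [Function.Embedding.coeFn_mk, Fin.cons_succ]
      have h0mem : (0 : Fin (n+1)) ∈ Finset.univ.erase k.succ :=
        Finset.mem_erase.mpr ⟨(Fin.succ_ne_zero k).symm, Finset.mem_univ _⟩
      rw [← Finset.mul_prod_erase _ _ h0mem]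
      congr 1
      rw [Finset.erase_right_comm, herase0,
        show ((Finset.map ⟨Fin.succ, Fin.succ_injective n⟩ Finset.univ).erase k.succ)
          = Finset.map ⟨Fin.succ, Fin.succ_injective n⟩ (Finset.univ.erase k) from
          (Finset.map_erase _ _ _).symm, Finset.prod_map]
      rfl
  rw [hsplit]
  simp only [map_mul, map_prod, map_pow, map_sub, MvPolynomial.finSuccEquiv_X_zero,
    MvPolynomial.finSuccEquiv_X_succ]
  rw [Finset.prod_pow]
  unfold Ahat Bhat
  congr 1
  rw [Finset.prod_mul_distrib]
  congr 1
  rw [Fdy, map_prod]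
  apply Finset.prod_congr rfl
  intro k _
  rw [map_prod]
  apply Finset.prod_congr rfl
  intro i _
  rw [map_pow, map_sub]

lemma cm_value (n : ℕ) (a : Fin n → ℕ) (m : ℕ) :
    MvPolynomial.coeff (Finsupp.equivFunOnFinite.symm fun j => n * a j)
      (Polynomial.coeff ((Ahat n)^m * Bhat n a) (n*m))
    = ((m + ∑ l, a l).factorial : ℚ)
        / ((m.factorial : ℚ) * ∏ l, ((a l).factorial : ℚ)) := by
  rw [← phi_F, MvPolynomial.finSuccEquiv_coeff_coeff]
  have hcons : (Finsupp.cons (n*m) (Finsupp.equivFunOnFinite.symm fun j => n * a j)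
        : Fin (n+1) →₀ ℕ)
      = Finsupp.equivFunOnFinite.symm
          fun j => ((Finset.univ : Finset (Fin (n+1))).card - 1) * ((Fin.cons m a : Fin (n+1) → ℕ) j) := by
    ext j
    induction j using Fin.cases with
    | zero => simp
    | succ k => simp
  rw [hcons, partI ((Finset.univ : Finset (Fin (n+1))).card + ∑ j, Fin.cons m a j)
    Finset.univ (Fin.cons m a) (by simp) rfl]
  rw [Fin.sum_univ_succ, Fin.prod_univ_succ]
  simp

noncomputable def Aprime (n : ℕ) : Polynomial (MvPolynomial (Fin n) ℚ) :=
  Ahat n - Polynomial.X ^ n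

lemma Ahat_monic (n : ℕ) : (Ahat n).Monic :=
  Polynomial.monic_prod_of_monic _ _ fun i _ => Polynomial.monic_X_sub_C _

lemma Ahat_natDegree (n : ℕ) : (Ahat n).natDegree = n := by
  rw [Ahat, Polynomial.natDegree_prod_of_monic _ _
    (fun i _ => Polynomial.monic_X_sub_C _)]
  simp

lemma Aprime_natDegree_le (n : ℕ) (hn : 1 ≤ n) : (Aprime n).natDegree ≤ n - 1 := by
  have hdeg : (Aprime n).degree < (Ahat n).degree := by
    rw [Aprime]
    apply Polynomial.degree_sub_lt
    · rw [Polynomial.degree_X_pow, Polynomial.degree_eq_natDegree (Ahat_monic n).ne_zero,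
        Ahat_natDegree]
    · exact (Ahat_monic n).ne_zero
    · rw [(Ahat_monic n).leadingCoeff, Polynomial.leadingCoeff_X_pow]
  rw [Polynomial.degree_eq_natDegree (Ahat_monic n).ne_zero, Ahat_natDegree] at hdeg
  rcases eq_or_ne (Aprime n) 0 with h | h
  · simp [h]
  · have := (Polynomial.natDegree_lt_iff_degree_lt h).mpr hdeg
    omega

lemma Aprime_coeff (n : ℕ) (hn : 1 ≤ n) :
    (Aprime n).coeff (n-1) = -(∑ i, (X i : MvPolynomial (Fin n) ℚ)) := by
  rw [Aprime, Polynomial.coeff_sub, Polynomial.coeff_X_pow, if_neg (by omega), sub_zero]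
  have hA : Ahat n = ((Finset.univ.val.map (fun i => (X i : MvPolynomial (Fin n) ℚ))).map
      (fun t => Polynomial.X - Polynomial.C t)).prod := by
    rw [Multiset.map_map, Ahat]
    rfl
  have hcard : Multiset.card (Finset.univ.val.map
      (fun i => (X i : MvPolynomial (Fin n) ℚ))) = n := by simp
  rw [hA, Multiset.prod_X_sub_C_coeff _ (by rw [hcard]; omega), hcard,
    show n - (n-1) = 1 by omega, pow_one]
  have hesymm : (Finset.univ.val.map (fun i => (X i : MvPolynomial (Fin n) ℚ))).esymm 1
      = ∑ i, (X i : MvPolynomial (Fin n) ℚ) := by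
    rw [Multiset.esymm, Multiset.powersetCard_one, Multiset.map_map, Multiset.map_map]
    simp only [Function.comp_def, Multiset.prod_singleton]
    rfl
  rw [hesymm]
  ring

lemma Bhat_natDegree_le (n : ℕ) (a : Fin n → ℕ) :
    (Bhat n a).natDegree ≤ ∑ l, a l := by
  apply le_trans (Polynomial.natDegree_mul_le)
  have h1 : (∏ i, (Polynomial.C (X i : MvPolynomial (Fin n) ℚ)
      - Polynomial.X)^(a i)).natDegree ≤ ∑ l, a l := by
    refine le_trans (Polynomial.natDegree_prod_le _ _) ?_
    apply Finset.sum_le_sum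
    intro i _
    apply le_trans Polynomial.natDegree_pow_le
    have : (Polynomial.C (X i : MvPolynomial (Fin n) ℚ) - Polynomial.X).natDegree = 1 := by
      rw [show Polynomial.C (X i : MvPolynomial (Fin n) ℚ) - Polynomial.X
        = -(Polynomial.X - Polynomial.C (X i)) by ring, Polynomial.natDegree_neg,
        Polynomial.natDegree_X_sub_C]
    rw [this, mul_one]
  simpa [Bhat, Polynomial.natDegree_C] using h1

lemma Bhat_coeff (n : ℕ) (a : Fin n → ℕ) :
    (Bhat n a).coeff (∑ l, a l)
      = (-1)^(∑ l, a l) * Fdy (Finset.univ : Finset (Fin n)) a := by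
  rw [Bhat, Polynomial.coeff_mul_C]
  have hB0 : (∏ i, (Polynomial.C (X i : MvPolynomial (Fin n) ℚ) - Polynomial.X)^(a i))
      = Polynomial.C ((-1 : MvPolynomial (Fin n) ℚ)^(∑ l, a l)) *
          ∏ i, (Polynomial.X - Polynomial.C (X i))^(a i) := by
    rw [map_pow, map_neg, map_one, ← Finset.prod_pow_eq_pow_sum, ← Finset.prod_mul_distrib]
    apply Finset.prod_congr rfl
    intro i _
    rw [show Polynomial.C (X i : MvPolynomial (Fin n) ℚ) - Polynomial.X
      = -(Polynomial.X - Polynomial.C (X i)) by ring]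
    exact neg_pow (R := Polynomial (MvPolynomial (Fin n) ℚ)) _ _
  rw [hB0, Polynomial.coeff_C_mul]
  have hM : (∏ i, (Polynomial.X - Polynomial.C (X i : MvPolynomial (Fin n) ℚ))^(a i)).Monic :=
    Polynomial.monic_prod_of_monic _ _ fun i _ => (Polynomial.monic_X_sub_C _).pow _
  have hMdeg : (∏ i, (Polynomial.X
      - Polynomial.C (X i : MvPolynomial (Fin n) ℚ))^(a i)).natDegree = ∑ l, a l := by
    rw [Polynomial.natDegree_prod_of_monic _ _
      (fun i _ => (Polynomial.monic_X_sub_C _).pow _)]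
    apply Finset.sum_congr rfl
    intro i _
    rw [(Polynomial.monic_X_sub_C _).natDegree_pow, Polynomial.natDegree_X_sub_C, mul_one]
  have h1 : (∏ i, (Polynomial.X
      - Polynomial.C (X i : MvPolynomial (Fin n) ℚ))^(a i)).coeff (∑ l, a l) = 1 := by
    rw [← hMdeg]
    exact hM.coeff_natDegree
  rw [h1, mul_one]

lemma gamma_top (n : ℕ) (hn : 1 ≤ n) (a : Fin n → ℕ) :
    Polynomial.coeff ((Aprime n)^(∑ l, a l) * Bhat n a) (n * (∑ l, a l))
      = (∑ i, (X i : MvPolynomial (Fin n) ℚ))^(∑ l, a l)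
          * Fdy (Finset.univ : Finset (Fin n)) a := by
  set d := ∑ l, a l with hd
  have hsplit : n * d = d * (n-1) + d := by
    conv_lhs => rw [show n = (n-1)+1 by omega]
    rw [add_mul, one_mul, mul_comm]
  have hA : ((Aprime n)^d).natDegree ≤ d * (n-1) :=
    Polynomial.natDegree_pow_le_of_le d (Aprime_natDegree_le n hn)
  rw [hsplit, Polynomial.coeff_mul_add_eq_of_natDegree_le hA (Bhat_natDegree_le n a),
    Polynomial.coeff_pow_of_natDegree_le (Aprime_natDegree_le n hn),
    Aprime_coeff n hn, Bhat_coeff n a, neg_pow]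
  rw [show ((-1 : MvPolynomial (Fin n) ℚ)^d * (∑ i, (X i : MvPolynomial (Fin n) ℚ))^d)
        * ((-1)^d * Fdy (Finset.univ : Finset (Fin n)) a)
      = ((-1 : MvPolynomial (Fin n) ℚ)^d * (-1)^d)
        * ((∑ i, (X i : MvPolynomial (Fin n) ℚ))^d * Fdy Finset.univ a) by ring,
    ← mul_pow]
  norm_num

lemma expansion (n : ℕ) (a : Fin n → ℕ) (m : ℕ) (hm : m ≤ ∑ l, a l) :
    MvPolynomial.coeff (Finsupp.equivFunOnFinite.symm fun j => n * a j)
      (Polynomial.coeff ((Ahat n)^m * Bhat n a) (n*m))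
      = ∑ l ∈ Finset.range ((∑ l, a l)+1), (m.choose l : ℚ) *
          MvPolynomial.coeff (Finsupp.equivFunOnFinite.symm fun j => n * a j)
            (Polynomial.coeff ((Aprime n)^l * Bhat n a) (n*l)) := by
  have hAm : (Ahat n)^m = ∑ l ∈ Finset.range (m+1),
      (Aprime n)^l * (Polynomial.X^n)^(m-l)
        * ((m.choose l : ℕ) : Polynomial (MvPolynomial (Fin n) ℚ)) := by
    conv_lhs => rw [show Ahat n = Aprime n + Polynomial.X^n by rw [Aprime]; ring]
    exact add_pow _ _ m
  rw [hAm, Finset.sum_mul, Polynomial.finset_sum_coeff, MvPolynomial.coeff_sum]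
  have hterm : ∀ l ∈ Finset.range (m+1),
      MvPolynomial.coeff (Finsupp.equivFunOnFinite.symm fun j => n * a j)
        (Polynomial.coeff ((Aprime n)^l * (Polynomial.X^n)^(m-l)
          * ((m.choose l : ℕ) : Polynomial (MvPolynomial (Fin n) ℚ)) * Bhat n a) (n*m))
      = (m.choose l : ℚ) *
          MvPolynomial.coeff (Finsupp.equivFunOnFinite.symm fun j => n * a j)
            (Polynomial.coeff ((Aprime n)^l * Bhat n a) (n*l)) := by
    intro l hl
    have hlm : l ≤ m := Nat.lt_succ_iff.mp (Finset.mem_range.mp hl)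
    have hre : (Aprime n)^l * (Polynomial.X^n)^(m-l)
          * ((m.choose l : ℕ) : Polynomial (MvPolynomial (Fin n) ℚ)) * Bhat n a
        = Polynomial.C ((m.choose l : ℕ) : MvPolynomial (Fin n) ℚ) *
            (Polynomial.X^(n*(m-l)) * ((Aprime n)^l * Bhat n a)) := by
      rw [Polynomial.C_eq_natCast, ← pow_mul]
      push_cast
      ring
    rw [hre, Polynomial.coeff_C_mul,
      show n*m = n*l + n*(m-l) by rw [← Nat.mul_add, Nat.add_sub_cancel' hlm],
      Polynomial.coeff_X_pow_mul, ← MvPolynomial.C_eq_coe_nat, MvPolynomial.coeff_C_mul]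
  rw [Finset.sum_congr rfl hterm]
  apply Finset.sum_subset
  · intro x hx
    simp only [Finset.mem_range] at *
    omega
  · intro l _ hl
    simp only [Finset.mem_range] at hl
    rw [Nat.choose_eq_zero_of_lt (by omega), Nat.cast_zero, zero_mul]

/-- **Leading coefficient identity for the Dyson product** (Corollary 6.2).  With
`d = a_1 + ⋯ + a_n`,
`CT_x (x_1+⋯+x_n)^d ∏_l x_l^(-a_l) ∏_{1≤i≠j≤n}(1-x_i/x_j)^(a_j) = d!/(a_1!⋯a_n!)`.
Clearing denominators, the constant term equals the coefficient of `∏_j x_j^(n·a_j)` in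
`(x_1+⋯+x_n)^d · ∏_{i≠j}(x_j-x_i)^(a_j)`. -/
theorem dyson_leading_coefficient (n : ℕ) (a : Fin n → ℕ) (d : ℕ) (hd : d = ∑ l, a l) :
    MvPolynomial.coeff (Finsupp.equivFunOnFinite.symm fun j => n * a j)
      ((∑ l : Fin n, X l) ^ d *
        ∏ j : Fin n, ∏ i ∈ Finset.univ.erase j,
          (X j - X i : MvPolynomial (Fin n) ℚ) ^ (a j))
      = (d.factorial : ℚ) / ∏ l, ((a l).factorial : ℚ) := by
  subst hd
  rcases Nat.eq_zero_or_pos n with rfl | hn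
  · have h0 : (Finsupp.equivFunOnFinite.symm fun j : Fin 0 => 0 * a j) = 0 := by
      ext j
      exact j.elim0
    rw [h0]
    simp
  set D := ∑ l, a l with hD
  set NA : Fin n →₀ ℕ := Finsupp.equivFunOnFinite.symm fun j => n * a j with hNA
  set P : ℚ := ∏ l, ((a l).factorial : ℚ) with hP
  have hP0 : P ≠ 0 := Finset.prod_ne_zero_iff.mpr fun l _ => by
    exact_mod_cast (a l).factorial_ne_zero
  set g : ℕ → ℚ := fun l => MvPolynomial.coeff NA
    (Polynomial.coeff ((Aprime n)^l * Bhat n a) (n*l)) with hg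
  -- the alternating sum, evaluated two ways
  have hWayB : ∑ m ∈ Finset.range (D+1), (-1:ℚ)^(D-m) * (D.choose m) *
      (MvPolynomial.coeff NA (Polynomial.coeff ((Ahat n)^m * Bhat n a) (n*m))) = g D := by
    have h1 : ∀ m ∈ Finset.range (D+1), (-1:ℚ)^(D-m) * (D.choose m) *
        (MvPolynomial.coeff NA (Polynomial.coeff ((Ahat n)^m * Bhat n a) (n*m)))
        = ∑ l ∈ Finset.range (D+1),
            (-1:ℚ)^(D-m) * (D.choose m) * (m.choose l) * g l := by
      intro m hm
      rw [expansion n a m (Nat.lt_succ_iff.mp (Finset.mem_range.mp hm)), Finset.mul_sum]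
      exact Finset.sum_congr rfl fun l _ => by rw [hg]; ring
    rw [Finset.sum_congr rfl h1, Finset.sum_comm]
    have h2 : ∀ l ∈ Finset.range (D+1),
        ∑ m ∈ Finset.range (D+1), (-1:ℚ)^(D-m) * (D.choose m) * (m.choose l) * g l
        = (if l = D then 1 else 0) * g l := by
      intro l hl
      rw [← Finset.sum_mul, alt_sum_choose_mul_choose D l (Nat.lt_succ_iff.mp
        (Finset.mem_range.mp hl))]
    rw [Finset.sum_congr rfl h2]
    simp only [ite_mul, one_mul, zero_mul]
    rw [Finset.sum_ite_eq' (Finset.range (D+1)) D g,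
      if_pos (Finset.self_mem_range_succ D)]
  have hWayA : ∑ m ∈ Finset.range (D+1), (-1:ℚ)^(D-m) * (D.choose m) *
      (MvPolynomial.coeff NA (Polynomial.coeff ((Ahat n)^m * Bhat n a) (n*m)))
      = (D.factorial : ℚ) / P := by
    have h1 : ∀ m ∈ Finset.range (D+1), (-1:ℚ)^(D-m) * (D.choose m) *
        (MvPolynomial.coeff NA (Polynomial.coeff ((Ahat n)^m * Bhat n a) (n*m)))
        = (-1:ℚ)^(D-m) * (D.choose m) * ((m+D).choose D) * ((D.factorial : ℚ) / P) := by
      intro m _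
      rw [hNA, cm_value n a m, ← hD, ← hP]
      have hfac : ((m+D).choose D : ℚ) * (D.factorial : ℚ) * (m.factorial : ℚ)
          = ((m+D).factorial : ℚ) := by
        have hnat := Nat.choose_mul_factorial_mul_factorial (Nat.le_add_left D m)
        rw [Nat.add_sub_cancel] at hnat
        exact_mod_cast hnat
      have hm0 : (m.factorial : ℚ) ≠ 0 := by exact_mod_cast m.factorial_ne_zero
      have hval : ((m+D).factorial : ℚ)/((m.factorial : ℚ) * P)
          = (((m+D).choose D : ℚ) * (D.factorial : ℚ))/P := by
        rw [div_eq_div_iff (mul_ne_zero hm0 hP0) hP0]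
        linear_combination (-P) * hfac
      rw [hval]
      ring
    rw [Finset.sum_congr rfl h1, ← Finset.sum_mul, alt_sum_choose_mul_add_choose D, one_mul]
  have htarget : MvPolynomial.coeff NA
      ((∑ l : Fin n, X l) ^ D *
        ∏ j : Fin n, ∏ i ∈ Finset.univ.erase j,
          (X j - X i : MvPolynomial (Fin n) ℚ) ^ (a j)) = g D := by
    have h := gamma_top n hn a
    rw [← hD] at h
    show _ = MvPolynomial.coeff NA ((Aprime n ^ D * Bhat n a).coeff (n * D))
    rw [h, Fdy]
  rw [htarget, ← hWayB, hWayA]
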